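/- arXiv:2605.18238 — 4 statements merged into one kernel-verified Lean document; each statement's English description precedes it below -/
import Mathlib

section
/- Let 0 < τ < 1 and let p be a real number with |p| < τ. Define α*(p,τ) = √(1−τ²)·(p√(1−τ²) + τ√(1−p²)) / (τ² − p²). Then α*(p,τ) > 0 and, with f(α) = (1 + αp)/√(1 + 2αp + α²), one has f(α*(p,τ)) = τ. -/
/-!
Write `p = cos φ` and `τ = cos ψ` with `0 < ψ < φ < π`, and let `u`, `v` be unit vectors at angle `φ`.
By the law of sines in the triangle `0, u, u + α v`, the angle between `u` and `u + α v` is `ψ`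
exactly for `α = sin ψ / sin (φ - ψ)`, which is `α*`; the third side is then
`‖u + α* v‖ = sin φ / sin (φ - ψ)`. Algebraically, `1 + α* p = τ ‖u + α* v‖` and
`1 + 2 α* p + α*² = ‖u + α* v‖²`, so `f α* = τ`.
-/

open Real

noncomputable section

def alphaStar (τ p : ℝ) : ℝ :=
  √(1 - τ ^ 2) * (p * √(1 - τ ^ 2) + τ * √(1 - p ^ 2)) / (τ ^ 2 - p ^ 2)

/-- The norm `‖u + α* v‖` for unit vectors `u`, `v` with `⟪u, v⟫ = p`. -/
def alphaStarNorm (τ p : ℝ) : ℝ :=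
  √(1 - p ^ 2) * (τ * √(1 - p ^ 2) + p * √(1 - τ ^ 2)) / (τ ^ 2 - p ^ 2)

end

section Identities

variable {τ p : ℝ} (hτ : τ ^ 2 ≤ 1) (hp : p ^ 2 ≤ 1) (hD : τ ^ 2 - p ^ 2 ≠ 0)
include hτ hp hD

theorem one_add_alphaStar_mul : 1 + alphaStar τ p * p = τ * alphaStarNorm τ p := by
  have hs := sq_sqrt (sub_nonneg.mpr hτ)
  have hq := sq_sqrt (sub_nonneg.mpr hp)
  unfold alphaStar alphaStarNorm
  field_simp
  linear_combination p ^ 2 * hs - τ ^ 2 * hq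

theorem one_add_two_mul_alphaStar_add_sq :
    1 + 2 * alphaStar τ p * p + alphaStar τ p ^ 2 = alphaStarNorm τ p ^ 2 := by
  have hs := sq_sqrt (sub_nonneg.mpr hτ)
  have hq := sq_sqrt (sub_nonneg.mpr hp)
  unfold alphaStar alphaStarNorm
  set s := √(1 - τ ^ 2)
  set q := √(1 - p ^ 2)
  field_simp
  linear_combination ((p * s + τ * q) ^ 2 + (τ ^ 2 - p ^ 2) * p ^ 2) * hs -
    ((p * s + τ * q) ^ 2 + (τ ^ 2 - p ^ 2) * τ ^ 2) * hq

end Identities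

section Positivity

variable {τ p : ℝ} (hp : |p| < τ) (hτ : τ < 1)
include hp hτ

theorem sq_lt_sq_and_sq_lt_one : p ^ 2 < τ ^ 2 ∧ τ ^ 2 < 1 :=
  ⟨sq_lt_sq' (neg_lt_of_abs_lt hp) (lt_of_abs_lt hp), by nlinarith [abs_nonneg p]⟩

theorem mul_sqrt_add_mul_sqrt_pos : 0 < p * √(1 - τ ^ 2) + τ * √(1 - p ^ 2) := by
  obtain ⟨hpτ, hτ1⟩ := sq_lt_sq_and_sq_lt_one hp hτ
  have hq : 0 < √(1 - p ^ 2) := sqrt_pos.mpr (by linarith)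
  have hsq : √(1 - τ ^ 2) ≤ √(1 - p ^ 2) := sqrt_le_sqrt (by linarith)
  linarith [mul_lt_mul_of_pos_right hp hq, mul_le_mul_of_nonneg_left hsq (abs_nonneg p),
    mul_le_mul_of_nonneg_right (neg_abs_le p) (sqrt_nonneg (1 - τ ^ 2))]

theorem alphaStar_pos : 0 < alphaStar τ p := by
  obtain ⟨hpτ, hτ1⟩ := sq_lt_sq_and_sq_lt_one hp hτ
  have hs : 0 < √(1 - τ ^ 2) := sqrt_pos.mpr (by linarith)
  exact div_pos (mul_pos hs (mul_sqrt_add_mul_sqrt_pos hp hτ)) (sub_pos.mpr hpτ)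

theorem alphaStarNorm_pos : 0 < alphaStarNorm τ p := by
  obtain ⟨hpτ, hτ1⟩ := sq_lt_sq_and_sq_lt_one hp hτ
  have hq : 0 < √(1 - p ^ 2) := sqrt_pos.mpr (by linarith)
  rw [alphaStarNorm, add_comm]
  exact div_pos (mul_pos hq (mul_sqrt_add_mul_sqrt_pos hp hτ)) (sub_pos.mpr hpτ)

end Positivity

theorem alphaStar_pos_and_hits_threshold_general
    (τ p : ℝ) (hτ1 : τ < 1) (hp : |p| < τ) :
    0 < Real.sqrt (1 - τ ^ 2) * (p * Real.sqrt (1 - τ ^ 2) + τ * Real.sqrt (1 - p ^ 2)) /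
        (τ ^ 2 - p ^ 2) ∧
    (fun a : ℝ => (1 + a * p) / Real.sqrt (1 + 2 * a * p + a ^ 2))
      (Real.sqrt (1 - τ ^ 2) * (p * Real.sqrt (1 - τ ^ 2) + τ * Real.sqrt (1 - p ^ 2)) /
        (τ ^ 2 - p ^ 2)) = τ := by
  obtain ⟨hpτ, hτ2⟩ := sq_lt_sq_and_sq_lt_one hp hτ1
  have hp2 : p ^ 2 ≤ 1 := (hpτ.trans hτ2).le
  have hD : τ ^ 2 - p ^ 2 ≠ 0 := (sub_pos.mpr hpτ).ne'
  refine ⟨alphaStar_pos hp hτ1, ?_⟩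
  change (1 + alphaStar τ p * p) / √(1 + 2 * alphaStar τ p * p + alphaStar τ p ^ 2) = τ
  rw [one_add_alphaStar_mul hτ2.le hp2 hD, one_add_two_mul_alphaStar_add_sq hτ2.le hp2 hD,
    sqrt_sq (alphaStarNorm_pos hp hτ1).le, mul_div_cancel_right₀ _ (alphaStarNorm_pos hp hτ1).ne']

theorem alphaStar_pos_and_hits_threshold
    (τ p : ℝ) (hτ : 0 < τ) (hτ1 : τ < 1) (hp : |p| < τ) :
    0 < Real.sqrt (1 - τ ^ 2) * (p * Real.sqrt (1 - τ ^ 2) + τ * Real.sqrt (1 - p ^ 2)) /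
        (τ ^ 2 - p ^ 2) ∧
    (fun a : ℝ => (1 + a * p) / Real.sqrt (1 + 2 * a * p + a ^ 2))
      (Real.sqrt (1 - τ ^ 2) * (p * Real.sqrt (1 - τ ^ 2) + τ * Real.sqrt (1 - p ^ 2)) /
        (τ ^ 2 - p ^ 2)) = τ :=
  alphaStar_pos_and_hits_threshold_general τ p hτ1 hp
end

section
/- Let 0 < τ ≤ 1/√2, let p ∈ [−τ, 0], and let α > √(1−τ²)/τ. Then (1 + αp)/√(1 + 2αp + α²) < τ. (That is, the orthogonal worst-case perturbation magnitude √(1−τ²)/τ is sufficient to drive the cosine similarity below τ uniformly over the repulsive range p ∈ [−τ, 0].) -/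
theorem sufficient_perturbation_over_repulsive_range
    (τ p α : ℝ) (hτ : 0 < τ) (hτ2 : τ ≤ 1 / Real.sqrt 2)
    (hp : p ∈ Set.Icc (-τ) 0)
    (hα : Real.sqrt (1 - τ ^ 2) / τ < α) :
    (1 + α * p) / Real.sqrt (1 + 2 * α * p + α ^ 2) < τ := by
  obtain ⟨hp1, hp2⟩ := hp
  have hτsq : τ ^ 2 ≤ 1 / 2 := by
    have h2 : Real.sqrt 2 ^ 2 = 2 := Real.sq_sqrt (by norm_num)
    have h2p : (0:ℝ) < Real.sqrt 2 := Real.sqrt_pos.2 (by norm_num)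
    rw [le_div_iff₀ h2p] at hτ2
    nlinarith
  have hs2 : Real.sqrt (1 - τ ^ 2) ^ 2 = 1 - τ ^ 2 := Real.sq_sqrt (by nlinarith)
  have hs0 : 0 ≤ Real.sqrt (1 - τ ^ 2) := Real.sqrt_nonneg _
  generalize hsd : Real.sqrt (1 - τ ^ 2) = s at hα hs2 hs0
  have hsτ : s < α * τ := by
    rw [div_lt_iff₀ hτ] at hα; linarith
  have hα0 : 0 < α := by nlinarith
  have hpsq : p ^ 2 ≤ τ ^ 2 := by nlinarith
  have hD : 0 < 1 + 2 * α * p + α ^ 2 := by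
    nlinarith [sq_nonneg (1 + α * p), mul_pos hα0 hα0]
  have hDs : 0 < Real.sqrt (1 + 2 * α * p + α ^ 2) := Real.sqrt_pos.2 hD
  rcases le_or_gt (1 + α * p) 0 with hn | hn
  · calc (1 + α * p) / Real.sqrt (1 + 2 * α * p + α ^ 2) ≤ 0 :=
        div_nonpos_of_nonpos_of_nonneg hn hDs.le
      _ < τ := hτ
  · have key : (1 + α * p) ^ 2 < τ ^ 2 * (1 + 2 * α * p + α ^ 2) := by
      have hb : 0 < α * τ - s := by linarith
      have h1 : 0 ≤ (1 - τ^2) * (-p) * (p + 2*s*τ) := by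
        apply mul_nonneg (mul_nonneg (by nlinarith) (by linarith))
        nlinarith
      have h2 : 0 ≤ (α^2*τ^2 - (1 - τ^2)) * (τ^2 - p^2) := by
        apply mul_nonneg _ (by nlinarith)
        nlinarith
      rcases eq_or_lt_of_le hp2 with hpe | hpl
      · subst hpe; nlinarith
      · have h3 : 0 < (α*τ - s) * τ * ((-p) * (1 - τ^2)) := by
          apply mul_pos (mul_pos hb hτ)
          exact mul_pos (by linarith) (by linarith)
        have hE : (1 + α * p) ^ 2 * τ ^ 2 < τ ^ 2 * (1 + 2 * α * p + α ^ 2) * τ ^ 2 := by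
          linarith [h1, h2, h3]
        exact lt_of_mul_lt_mul_right hE (sq_nonneg τ)
    rw [div_lt_iff₀ hDs]
    have hτD : τ * Real.sqrt (1 + 2 * α * p + α ^ 2)
        = Real.sqrt (τ ^ 2 * (1 + 2 * α * p + α ^ 2)) := by
      rw [Real.sqrt_mul (by positivity), Real.sqrt_sq hτ.le]
    rw [hτD]
    nlinarith [Real.sq_sqrt (by positivity : (0:ℝ) ≤ τ ^ 2 * (1 + 2 * α * p + α ^ 2)),
      Real.sqrt_nonneg (τ ^ 2 * (1 + 2 * α * p + α ^ 2))]
end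

section
/- Let 0 < τ < 1 and let α*(p,τ) = √(1−τ²)·(p√(1−τ²) + τ√(1−p²))/(τ² − p²) for |p| < τ. Then the limit of α*(p,τ) + p as p tends to −τ from the right equals (1 − 2τ²)/(2τ); in particular this limit is nonnegative if and only if τ ≤ 1/√2. -/
theorem limit_of_alphaStar_add_p_at_boundary
    (τ : ℝ) (hτ : 0 < τ) (hτ1 : τ < 1) :
    Filter.Tendsto
      (fun p : ℝ =>
        Real.sqrt (1 - τ ^ 2) * (p * Real.sqrt (1 - τ ^ 2) + τ * Real.sqrt (1 - p ^ 2)) /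
          (τ ^ 2 - p ^ 2) + p)
      (nhdsWithin (-τ) (Set.Ioc (-τ) 0))
      (nhds ((1 - 2 * τ ^ 2) / (2 * τ))) ∧
    (0 ≤ (1 - 2 * τ ^ 2) / (2 * τ) ↔ τ ≤ 1 / Real.sqrt 2) := by
  have hs2 : (0:ℝ) < 1 - τ ^ 2 := by nlinarith
  set s := Real.sqrt (1 - τ ^ 2) with hsdef
  have hs : 0 < s := Real.sqrt_pos.mpr hs2
  have hssq : s ^ 2 = 1 - τ ^ 2 := Real.sq_sqrt hs2.le
  constructor
  · -- limit part
    set g : ℝ → ℝ := fun p => s / (τ * Real.sqrt (1 - p ^ 2) - p * s) + p with hg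
    have hsτ : Real.sqrt (1 - (-τ) ^ 2) = s := by rw [hsdef]; ring_nf
    have hgc : ContinuousAt g (-τ) := by
      have hden : τ * Real.sqrt (1 - (-τ) ^ 2) - (-τ) * s ≠ 0 := by
        rw [hsτ]
        nlinarith [mul_pos hτ hs]
      exact ContinuousAt.add
        (ContinuousAt.div continuousAt_const (by fun_prop) hden) continuousAt_id
    have hgval : g (-τ) = (1 - 2 * τ ^ 2) / (2 * τ) := by
      simp only [hg, hsτ]
      rw [div_add' _ _ _ (by nlinarith [mul_pos hτ hs]), div_eq_div_iff
        (by nlinarith [mul_pos hτ hs]) (by positivity)]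
      ring
    have hlim : Filter.Tendsto g (nhdsWithin (-τ) (Set.Ioc (-τ) 0))
        (nhds ((1 - 2 * τ ^ 2) / (2 * τ))) := by
      rw [← hgval]
      exact hgc.continuousWithinAt.tendsto
    refine Filter.Tendsto.congr' ?_ hlim
    filter_upwards [self_mem_nhdsWithin] with p hp
    obtain ⟨hp1, hp2⟩ := hp
    have hpτ : p ^ 2 < τ ^ 2 := by nlinarith
    have hq2 : (0:ℝ) < 1 - p ^ 2 := by nlinarith
    set q := Real.sqrt (1 - p ^ 2) with hqdef
    have hq : 0 < q := Real.sqrt_pos.mpr hq2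
    have hqsq : q ^ 2 = 1 - p ^ 2 := Real.sq_sqrt hq2.le
    have hden : 0 < τ * q - p * s := by nlinarith [mul_pos hτ hq, mul_nonpos_of_nonpos_of_nonneg hp2 hs.le]
    simp only [hg]
    rw [add_left_inj, div_eq_div_iff hden.ne' (by nlinarith)]
    linear_combination -s * τ ^ 2 * hqsq + s * p ^ 2 * hssq
  · have hsq2 : (0:ℝ) < Real.sqrt 2 := Real.sqrt_pos.mpr (by norm_num)
    have hsq2sq : Real.sqrt 2 ^ 2 = 2 := Real.sq_sqrt (by norm_num)
    rw [le_div_iff₀ (by positivity), zero_mul, le_div_iff₀ hsq2]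
    constructor
    · intro h; nlinarith
    · intro h; nlinarith
end

section
/- Let 0 < τ ≤ 1/√2. Then the function p ↦ α*(p,τ) = √(1−τ²)·(p√(1−τ²) + τ√(1−p²))/(τ² − p²) is monotone nondecreasing on the interval (−τ, 0], and attains its maximum over this interval at p = 0, where α*(0,τ) = √(1−τ²)/τ. -/
theorem alphaStar_monotone_and_max_at_zero
    (τ : ℝ) (hτ : 0 < τ) (hτ2 : τ ≤ 1 / Real.sqrt 2) :
    MonotoneOn
      (fun p : ℝ =>
        Real.sqrt (1 - τ ^ 2) * (p * Real.sqrt (1 - τ ^ 2) + τ * Real.sqrt (1 - p ^ 2)) /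
          (τ ^ 2 - p ^ 2))
      (Set.Ioc (-τ) 0) ∧
    Real.sqrt (1 - τ ^ 2) * ((0 : ℝ) * Real.sqrt (1 - τ ^ 2) + τ * Real.sqrt (1 - (0 : ℝ) ^ 2)) /
        (τ ^ 2 - (0 : ℝ) ^ 2) = Real.sqrt (1 - τ ^ 2) / τ ∧
    (∀ p ∈ Set.Ioc (-τ) 0,
      Real.sqrt (1 - τ ^ 2) * (p * Real.sqrt (1 - τ ^ 2) + τ * Real.sqrt (1 - p ^ 2)) /
          (τ ^ 2 - p ^ 2) ≤ Real.sqrt (1 - τ ^ 2) / τ) := by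
  have hs2pos : (0:ℝ) < Real.sqrt 2 := by positivity
  have hτsq : τ ^ 2 ≤ 1 / 2 := by
    have h12 : (1 / Real.sqrt 2) ^ 2 = 1 / 2 := by
      rw [div_pow, one_pow, Real.sq_sqrt (by norm_num : (0:ℝ) ≤ 2)]
    calc τ ^ 2 ≤ (1 / Real.sqrt 2) ^ 2 := by
          exact pow_le_pow_left₀ hτ.le hτ2 2
      _ = 1 / 2 := h12
  set s := Real.sqrt (1 - τ ^ 2) with hs_def
  clear_value s
  have hs2 : s ^ 2 = 1 - τ ^ 2 := by
    rw [hs_def]; exact Real.sq_sqrt (by nlinarith)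
  have hs : 0 < s := by
    rw [hs_def]; exact Real.sqrt_pos.mpr (by nlinarith)
  -- basic facts for p in the interval
  have hfacts : ∀ p ∈ Set.Ioc (-τ) 0,
      p ^ 2 < τ ^ 2 ∧ (Real.sqrt (1 - p ^ 2)) ^ 2 = 1 - p ^ 2 ∧
      0 < Real.sqrt (1 - p ^ 2) ∧ τ * (-p) ≤ s * Real.sqrt (1 - p ^ 2) := by
    intro p hp
    obtain ⟨hp1, hp2⟩ := hp
    have hpsq : p ^ 2 < τ ^ 2 := by nlinarith
    have h1p : 0 < 1 - p ^ 2 := by nlinarith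
    have ha2 : (Real.sqrt (1 - p ^ 2)) ^ 2 = 1 - p ^ 2 := Real.sq_sqrt h1p.le
    have ha : 0 < Real.sqrt (1 - p ^ 2) := Real.sqrt_pos.mpr h1p
    refine ⟨hpsq, ha2, ha, ?_⟩
    have hsq : (τ * (-p)) ^ 2 ≤ (s * Real.sqrt (1 - p ^ 2)) ^ 2 := by
      have : (s * Real.sqrt (1 - p ^ 2)) ^ 2 = (1 - τ ^ 2) * (1 - p ^ 2) := by
        rw [mul_pow, hs2, ha2]
      rw [this]
      nlinarith
    have h1 : 0 ≤ τ * (-p) := by nlinarith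
    have h2 : 0 ≤ s * Real.sqrt (1 - p ^ 2) := by positivity
    nlinarith
  -- the denominator g p is positive
  have hgpos : ∀ p ∈ Set.Ioc (-τ) 0, 0 < τ * Real.sqrt (1 - p ^ 2) - p * s := by
    intro p hp
    obtain ⟨_, _, ha, _⟩ := hfacts p hp
    have : p ≤ 0 := hp.2
    nlinarith
  -- value rewriting
  have hval : ∀ p ∈ Set.Ioc (-τ) 0,
      s * (p * s + τ * Real.sqrt (1 - p ^ 2)) / (τ ^ 2 - p ^ 2)
        = s / (τ * Real.sqrt (1 - p ^ 2) - p * s) := by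
    intro p hp
    obtain ⟨hpsq, ha2, ha, _⟩ := hfacts p hp
    have hg := hgpos p hp
    set a := Real.sqrt (1 - p ^ 2)
    clear_value a
    have hfact : τ ^ 2 - p ^ 2 = (τ * a - p * s) * (τ * a + p * s) := by
      have : (τ * a) ^ 2 = τ ^ 2 * (1 - p ^ 2) := by rw [mul_pow, ha2]
      nlinarith [hs2]
    have hpos : 0 < τ * a + p * s := by
      by_contra h
      push_neg at h
      nlinarith
    rw [hfact]
    rw [show p * s + τ * a = τ * a + p * s by ring]
    rw [mul_comm (τ * a - p * s) (τ * a + p * s), mul_comm s (τ * a + p * s),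
      mul_div_mul_left _ _ hpos.ne']
  -- g is antitone on the interval
  have hganti : ∀ p ∈ Set.Ioc (-τ) 0, ∀ q ∈ Set.Ioc (-τ) 0, p ≤ q →
      τ * Real.sqrt (1 - q ^ 2) - q * s ≤ τ * Real.sqrt (1 - p ^ 2) - p * s := by
    intro p hp q hq hpq
    obtain ⟨_, ha2, ha, hkp⟩ := hfacts p hp
    obtain ⟨_, hb2, hb, hkq⟩ := hfacts q hq
    set a := Real.sqrt (1 - p ^ 2)
    set b := Real.sqrt (1 - q ^ 2)
    clear_value a b
    -- τ(b-a)(a+b) = τ(q-p)(-p-q) ≤ (q-p)(s a + s b) = (q-p) s (a+b)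
    have key : τ * (b - a) * (a + b) ≤ (q - p) * s * (a + b) := by
      have h1 : τ * (b - a) * (a + b) = τ * (p ^ 2 - q ^ 2) := by
        have : b ^ 2 - a ^ 2 = p ^ 2 - q ^ 2 := by rw [ha2, hb2]; ring
        nlinarith [this]
      rw [h1]
      have h2 : τ * (p ^ 2 - q ^ 2) = (q - p) * (τ * (-p) + τ * (-q)) := by ring
      rw [h2]
      have h3 : (q - p) * (τ * (-p) + τ * (-q)) ≤ (q - p) * (s * a + s * b) := by
        apply mul_le_mul_of_nonneg_left _ (by linarith)
        linarith
      calc (q - p) * (τ * (-p) + τ * (-q)) ≤ (q - p) * (s * a + s * b) := h3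
        _ = (q - p) * s * (a + b) := by ring
    have hab : 0 < a + b := by linarith
    have h4 : τ * (b - a) ≤ (q - p) * s := le_of_mul_le_mul_right key hab
    linarith [h4]
  -- monotonicity
  have hmono : MonotoneOn
      (fun p : ℝ =>
        s * (p * s + τ * Real.sqrt (1 - p ^ 2)) / (τ ^ 2 - p ^ 2))
      (Set.Ioc (-τ) 0) := by
    intro p hp q hq hpq
    simp only
    rw [hval p hp, hval q hq]
    have hgp := hgpos p hp
    have hgq := hgpos q hq
    have hle := hganti p hp q hq hpq
    gcongr
  have hzero : s * ((0 : ℝ) * s + τ * Real.sqrt (1 - (0 : ℝ) ^ 2)) / (τ ^ 2 - (0 : ℝ) ^ 2)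
      = s / τ := by
    have : Real.sqrt (1 - (0:ℝ) ^ 2) = 1 := by norm_num
    rw [this]
    field_simp
    ring
  refine ⟨hmono, hzero, ?_⟩
  intro p hp
  have h0 : (0:ℝ) ∈ Set.Ioc (-τ) 0 := ⟨by linarith, le_refl 0⟩
  have := hmono hp h0 hp.2
  simp only at this
  calc s * (p * s + τ * Real.sqrt (1 - p ^ 2)) / (τ ^ 2 - p ^ 2)
      ≤ s * ((0:ℝ) * s + τ * Real.sqrt (1 - (0:ℝ) ^ 2)) / (τ ^ 2 - (0:ℝ) ^ 2) := this
    _ = s / τ := hzero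
end
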